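/- Let $\lambda>\iota>0$, $\rho_0>\rho_\infty>0$, and $n\ge 2$. Suppose $\omega_1,\dots,\omega_{n-1}:[0,\infty)\to\mathbb{R}$ are $C^1$ functions forming a cascade of first-order filters: $\dot\omega_1+\lambda\omega_1=\bar z$ and $\dot\omega_{k}+\lambda\omega_{k}=\omega_{k-1}$ for $k=2,\dots,n-1$, where $|\bar z(t)|\le(\rho_0-\rho_\infty)e^{-\iota t}+\rho_\infty$ for all $t\ge0$. Then there exist constants $\bar\omega_k>0$ (defined recursively by $\bar\omega_1=|\omega_1(0)|+(\rho_0-\rho_\infty)/(\lambda-\iota)$ and $\bar\omega_k=|\omega_k(0)|+\bar\omega_{k-1}/(\lambda-\iota)$) such that $|\omega_k(t)|\le\bar\omega_k e^{-\iota t}+\rho_\infty/\lambda^k$ for all $t\ge0$ and $k=1,\dots,n-1$. -/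

import Mathlib

/-!
Multiplying `ω' + λ ω = u` by the integrating factor `e^{λ t}` turns it into `(e^{λ t} ω)' = e^{λ t} u`.
If `|u t| ≤ A e^{-ι t} + B` with `ι < λ`, the right-hand side is dominated by the derivative of
`e^{λ t} ((|ω 0| + A / (λ - ι)) e^{-ι t} + B / λ)`, which dominates `|e^{λ t} ω|` at `t = 0`;
the comparison principle for derivatives then bounds `ω` by a bound of the same shape, with
`A ↦ |ω 0| + A / (λ - ι)` and `B ↦ B / λ`. Feeding each filter's bound into the next gives the
cascade estimate.
-/

open Real Set

lemma hasDerivAt_exp_mul_of_hasDerivAt_sub_mul {lam x : ℝ} {f : ℝ → ℝ} {u : ℝ}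
    (hf : HasDerivAt f (u - lam * f x) x) :
    HasDerivAt (fun t => exp (lam * t) * f t) (exp (lam * x) * u) x := by
  have hexp : HasDerivAt (fun t => exp (lam * t)) (exp (lam * x) * lam) x := by
    simpa using ((hasDerivAt_id x).const_mul lam).exp
  exact (hexp.mul hf).congr_deriv (by ring)

lemma abs_le_of_hasDerivAt_sub_mul {lam ι A B : ℝ} (hιlam : ι < lam) (hlam : 0 < lam)
    (hA : 0 ≤ A) (hB : 0 ≤ B) {f u : ℝ → ℝ}
    (hf : ∀ t, 0 ≤ t → HasDerivAt f (u t - lam * f t) t)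
    (hu : ∀ t, 0 ≤ t → |u t| ≤ A * exp (-ι * t) + B) (T : ℝ) (hT : 0 ≤ T) :
    |f T| ≤ (|f 0| + A / (lam - ι)) * exp (-ι * T) + B / lam := by
  set C := |f 0| + A / (lam - ι)
  set g : ℝ → ℝ := fun t => C * exp (-ι * t) + B / lam
  have hv : ∀ x, 0 ≤ x →
      HasDerivAt (fun t => exp (lam * t) * f t) (exp (lam * x) * u x) x :=
    fun x hx => hasDerivAt_exp_mul_of_hasDerivAt_sub_mul (hf x hx)
  have hg : ∀ x, HasDerivAt g (C * (exp (-ι * x) * (-ι * 1))) x := fun x =>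
    (((hasDerivAt_id x).const_mul (-ι)).exp.const_mul C).add_const (B / lam)
  have hbound : ∀ x, HasDerivAt (fun t => exp (lam * t) * g t)
      (exp (lam * x) * ((lam - ι) * C * exp (-ι * x) + B)) x := fun x => by
    convert hasDerivAt_exp_mul_of_hasDerivAt_sub_mul (u := (lam - ι) * C * exp (-ι * x) + B)
      ((hg x).congr_deriv ?_) using 1
    simp only [g]
    field_simp
    ring
  have hAC : A ≤ (lam - ι) * C := by
    rw [mul_add, mul_div_cancel₀ A (sub_ne_zero.2 hιlam.ne')]
    nlinarith [abs_nonneg (f 0)]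
  have hdominated : ∀ x ∈ Ico 0 T,
      ‖exp (lam * x) * u x‖ ≤ exp (lam * x) * ((lam - ι) * C * exp (-ι * x) + B) := by
    intro x hx
    rw [norm_mul, norm_of_nonneg (exp_pos _).le, Real.norm_eq_abs]
    gcongr
    exact (hu x hx.1).trans (by gcongr)
  have hstart : ‖exp (lam * 0) * f 0‖ ≤ exp (lam * 0) * g 0 := by
    simp only [mul_zero, exp_zero, one_mul, Real.norm_eq_abs, g, C]
    have : 0 ≤ A / (lam - ι) := div_nonneg hA (sub_pos.2 hιlam).le
    have : 0 ≤ B / lam := div_nonneg hB hlam.le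
    linarith
  have hcompare := image_norm_le_of_norm_deriv_right_le_deriv_boundary
    (fun x hx => (hv x hx.1).continuousAt.continuousWithinAt)
    (fun x hx => (hv x hx.1).hasDerivWithinAt) hstart hbound hdominated (right_mem_Icc.2 hT)
  rw [norm_mul, norm_of_nonneg (exp_pos _).le, Real.norm_eq_abs] at hcompare
  exact le_of_mul_le_mul_left hcompare (exp_pos _)

noncomputable def cascadeGain (d A : ℝ) (w : ℕ → ℝ) : ℕ → ℝ
  | 0 => A
  | k + 1 => |w (k + 1)| + cascadeGain d A w k / d

lemma cascadeGain_nonneg {d A : ℝ} (hd : 0 ≤ d) (hA : 0 ≤ A) (w : ℕ → ℝ) (k : ℕ) :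
    0 ≤ cascadeGain d A w k := by
  induction k with
  | zero => exact hA
  | succ k ih => simp only [cascadeGain]; positivity

lemma cascadeGain_pos {d A : ℝ} (hd : 0 < d) (hA : 0 < A) (w : ℕ → ℝ) (k : ℕ) :
    0 < cascadeGain d A w k := by
  induction k with
  | zero => exact hA
  | succ k ih => simp only [cascadeGain]; positivity

lemma abs_le_of_filterCascade {lam ι A B : ℝ} (hιlam : ι < lam) (hlam : 0 < lam)
    (hA : 0 ≤ A) (hB : 0 ≤ B) {N : ℕ} {z : ℝ → ℝ} {ω : ℕ → ℝ → ℝ}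
    (hz : ∀ t, 0 ≤ t → |z t| ≤ A * exp (-ι * t) + B)
    (hω1 : ∀ t, 0 ≤ t → HasDerivAt (ω 1) (z t - lam * ω 1 t) t)
    (hωk : ∀ k, 2 ≤ k → k ≤ N → ∀ t, 0 ≤ t → HasDerivAt (ω k) (ω (k - 1) t - lam * ω k t) t) :
    ∀ k, 1 ≤ k → k ≤ N → ∀ t, 0 ≤ t →
      |ω k t| ≤ cascadeGain (lam - ι) A (fun k => ω k 0) k * exp (-ι * t) + B / lam ^ k := by
  have hd : 0 ≤ lam - ι := (sub_pos.2 hιlam).le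
  refine Nat.le_induction ?_ (fun k hk ih hkN => ?_)
  · intro _ t ht
    simpa [cascadeGain] using abs_le_of_hasDerivAt_sub_mul hιlam hlam hA hB hω1 hz t ht
  · intro t ht
    have hderiv : ∀ t, 0 ≤ t → HasDerivAt (ω (k + 1)) (ω k t - lam * ω (k + 1) t) t :=
      fun t ht => by simpa using hωk (k + 1) (by omega) hkN t ht
    have := abs_le_of_hasDerivAt_sub_mul hιlam hlam (cascadeGain_nonneg hd hA _ k)
      (by positivity) hderiv (ih (by omega)) t ht
    rwa [div_div, ← pow_succ] at this

theorem filter_cascade_bound_general (lam ι ρ₀ ρinf : ℝ) (n : ℕ)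
    (hlam : lam > ι) (hι : ι > 0) (hρ : ρ₀ > ρinf) (hρinf : ρinf > 0)
    (zbar : ℝ → ℝ) (ω : ℕ → ℝ → ℝ)
    (hz : ∀ t : ℝ, 0 ≤ t → |zbar t| ≤ (ρ₀ - ρinf) * Real.exp (-ι * t) + ρinf)
    (hω1 : ∀ t : ℝ, 0 ≤ t → HasDerivAt (ω 1) (zbar t - lam * ω 1 t) t)
    (hωk : ∀ k, 2 ≤ k → k ≤ n - 1 →
      ∀ t : ℝ, 0 ≤ t → HasDerivAt (ω k) (ω (k - 1) t - lam * ω k t) t) :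
    ∃ ωbar : ℕ → ℝ,
      ωbar 1 = |ω 1 0| + (ρ₀ - ρinf) / (lam - ι) ∧
      (∀ k, 2 ≤ k → k ≤ n - 1 → ωbar k = |ω k 0| + ωbar (k - 1) / (lam - ι)) ∧
      (∀ k, 1 ≤ k → k ≤ n - 1 → 0 < ωbar k) ∧
      (∀ k, 1 ≤ k → k ≤ n - 1 → ∀ t : ℝ, 0 ≤ t →
        |ω k t| ≤ ωbar k * Real.exp (-ι * t) + ρinf / lam ^ k) := by
  have hA : 0 < ρ₀ - ρinf := sub_pos.2 hρ
  refine ⟨cascadeGain (lam - ι) (ρ₀ - ρinf) (fun k => ω k 0), rfl, ?_,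
    fun k _ _ => cascadeGain_pos (sub_pos.2 hlam) hA _ k,
    abs_le_of_filterCascade hlam (hι.trans hlam) hA.le hρinf.le hz hω1 hωk⟩
  rintro (_ | k) hk _
  · omega
  · rfl

theorem filter_cascade_bound (lam ι ρ₀ ρinf : ℝ) (n : ℕ)
    (hlam : lam > ι) (hι : ι > 0) (hρ : ρ₀ > ρinf) (hρinf : ρinf > 0) (hn : 2 ≤ n)
    (zbar : ℝ → ℝ) (ω : ℕ → ℝ → ℝ)
    (hz : ∀ t : ℝ, 0 ≤ t → |zbar t| ≤ (ρ₀ - ρinf) * Real.exp (-ι * t) + ρinf)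
    (hC1 : ∀ k, 1 ≤ k → k ≤ n - 1 → Continuous (ω k))
    (hω1 : ∀ t : ℝ, 0 ≤ t → HasDerivAt (ω 1) (zbar t - lam * ω 1 t) t)
    (hωk : ∀ k, 2 ≤ k → k ≤ n - 1 →
      ∀ t : ℝ, 0 ≤ t → HasDerivAt (ω k) (ω (k - 1) t - lam * ω k t) t) :
    ∃ ωbar : ℕ → ℝ,
      ωbar 1 = |ω 1 0| + (ρ₀ - ρinf) / (lam - ι) ∧
      (∀ k, 2 ≤ k → k ≤ n - 1 → ωbar k = |ω k 0| + ωbar (k - 1) / (lam - ι)) ∧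
      (∀ k, 1 ≤ k → k ≤ n - 1 → 0 < ωbar k) ∧
      (∀ k, 1 ≤ k → k ≤ n - 1 → ∀ t : ℝ, 0 ≤ t →
        |ω k t| ≤ ωbar k * Real.exp (-ι * t) + ρinf / lam ^ k) :=
  filter_cascade_bound_general lam ι ρ₀ ρinf n hlam hι hρ hρinf zbar ω hz hω1 hωk
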